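/- arXiv:0911.2942 — 2 statements merged into one kernel-verified Lean document; each statement's English description precedes it below -/
import Mathlib

section
/- The map L : P ↦ M_T U_k U_kᵀ + V_{n−k} P U_{n−k}ᵀ is a bijection from 𝕆_{n−k} onto 𝕄(X,Y), and its inverse is the map M ↦ V_{n−k}ᵀ M U_{n−k}; that is, for every P ∈ 𝕆_{n−k}, V_{n−k}ᵀ L(P) U_{n−k} = P, and for every M ∈ 𝕄(X,Y), L(V_{n−k}ᵀ M U_{n−k}) = M. -/
/-!
Every `M ∈ 𝕄(X,Y)` agrees with `M_T` on `Col(X) = Col(U_k)` and, being orthogonal, maps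
`Col(X)ᗮ = Col(U_{n−k})` into `Col(Y)ᗮ = Col(V_{n−k})`, so
`V_{n−k} V_{n−k}ᵀ M U_{n−k} = M U_{n−k}`. Since `[U_k | U_{n−k}]` is orthogonal,
`U_k U_kᵀ + U_{n−k} U_{n−k}ᵀ = 1`, which gives `M = L(V_{n−k}ᵀ M U_{n−k})`. Conversely
`L(P) = [M_T U_k | V_{n−k} P] [U_k | U_{n−k}]ᵀ`, and the first factor has orthonormal columns
because `V_{n−k}ᵀ M_T U_k = 0`.
-/

open Matrix

/-- Euclidean norm of a vector in ℝ^m. -/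
noncomputable def euclNorm {m : ℕ} (x : Fin m → ℝ) : ℝ := Real.sqrt (∑ i, x i ^ 2)

/-- Column space of a matrix: the span of its columns. -/
def colSpace {n q : ℕ} (X : Matrix (Fin n) (Fin q) ℝ) : Submodule ℝ (Fin n → ℝ) :=
  Submodule.span ℝ (Set.range Xᵀ)

/-- Orthogonal complement (as a set) of a subspace of ℝ^n, w.r.t. the dot product. -/
def perpSet {n : ℕ} (W : Submodule ℝ (Fin n → ℝ)) : Set (Fin n → ℝ) :=
  {z | ∀ w ∈ W, z ⬝ᵥ w = 0}

section ColSpace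

variable {n p q : ℕ}

theorem colSpace_eq_range (A : Matrix (Fin n) (Fin p) ℝ) :
    colSpace A = LinearMap.range A.mulVecLin :=
  (range_mulVecLin A).symm

theorem colSpace_le_iff {A : Matrix (Fin n) (Fin p) ℝ} {B : Matrix (Fin n) (Fin q) ℝ} :
    colSpace B ≤ colSpace A ↔ ∃ C : Matrix (Fin p) (Fin q) ℝ, B = A * C := by
  simp only [colSpace_eq_range]
  constructor
  · intro h
    choose C hC using fun j => h ⟨Pi.single j 1, rfl⟩
    refine ⟨(of C)ᵀ, ext_of_mulVec_single fun j => ?_⟩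
    rw [← mulVec_mulVec]
    simpa [mulVec_single_one] using (hC j).symm
  · rintro ⟨C, rfl⟩
    rw [mulVecLin_mul]
    exact LinearMap.range_comp_le_range _ _

theorem colSpace_subset_perpSet_iff {A : Matrix (Fin n) (Fin p) ℝ}
    {B : Matrix (Fin n) (Fin q) ℝ} :
    (colSpace B : Set (Fin n → ℝ)) ⊆ perpSet (colSpace A) ↔ Bᵀ * A = 0 := by
  have hdot (x y) : B *ᵥ x ⬝ᵥ A *ᵥ y = (Bᵀ * A) *ᵥ y ⬝ᵥ x := by
    rw [← mulVec_mulVec, mulVec_transpose, ← dotProduct_mulVec, dotProduct_comm]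
  simp only [colSpace_eq_range, perpSet, Set.subset_def, SetLike.mem_coe, LinearMap.mem_range,
    forall_exists_index, forall_apply_eq_imp_iff, Set.mem_ofPred_eq, mulVecLin_apply, hdot]
  rw [forall_comm, ext_iff_mulVec]
  simp only [dotProduct_eq_zero_iff, zero_mulVec]

theorem mul_transpose_mul_of_colSpace_le {A : Matrix (Fin n) (Fin p) ℝ}
    {B : Matrix (Fin n) (Fin q) ℝ} (hA : Aᵀ * A = 1) (hBA : colSpace B ≤ colSpace A) :
    A * (Aᵀ * B) = B := by
  obtain ⟨C, rfl⟩ := colSpace_le_iff.1 hBA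
  rw [← Matrix.mul_assoc Aᵀ, hA, Matrix.one_mul]

end ColSpace

section Orthonormal

variable {R l m n k : Type*} [CommRing R]

theorem transpose_mul_eq_zero_comm [Fintype n] {A : Matrix n l R} {B : Matrix n m R} :
    Aᵀ * B = 0 ↔ Bᵀ * A = 0 := by
  rw [← transpose_eq_zero, transpose_mul, transpose_transpose]

theorem transpose_mul_self_mul_eq_one [Fintype n] [Fintype m] [DecidableEq m] [DecidableEq l]
    {A : Matrix n m R} {B : Matrix m l R} (hA : Aᵀ * A = 1) (hB : Bᵀ * B = 1) :
    (A * B)ᵀ * (A * B) = 1 := by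
  rw [transpose_mul, Matrix.mul_assoc, ← Matrix.mul_assoc Aᵀ, hA, Matrix.one_mul, hB]

theorem mul_transpose_add_mul_transpose_eq_one [Fintype n] [Fintype m] [Fintype k]
    [DecidableEq n] [DecidableEq m] [DecidableEq k] (e : n ≃ m ⊕ k)
    {U : Matrix n m R} {W : Matrix n k R} (hU : Uᵀ * U = 1) (hW : Wᵀ * W = 1)
    (hUW : Uᵀ * W = 0) :
    U * Uᵀ + W * Wᵀ = 1 := by
  have h : fromRows Uᵀ Wᵀ * fromCols U W = 1 := by
    rw [fromRows_mul_fromCols, hU, hW, hUW, transpose_mul_eq_zero_comm.1 hUW, fromBlocks_one]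
  rw [← fromCols_mul_fromRows]
  -- `[U | W]` is square, so its left inverse is a right inverse.
  exact (fromCols_mul_fromRows_eq_one_comm e _ _ _ _).2 h

theorem transpose_mul_self_add_eq_one [Fintype n] [Fintype l] [Fintype m]
    [DecidableEq l] [DecidableEq m] [DecidableEq k]
    {A : Matrix n l R} {B : Matrix n m R} {U : Matrix k l R} {W : Matrix k m R}
    (hA : Aᵀ * A = 1) (hB : Bᵀ * B = 1) (hBA : Bᵀ * A = 0) (hUW : U * Uᵀ + W * Wᵀ = 1) :
    (A * Uᵀ + B * Wᵀ)ᵀ * (A * Uᵀ + B * Wᵀ) = 1 := by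
  have hA' (C : Matrix l k R) : Aᵀ * (A * C) = C := by
    rw [← Matrix.mul_assoc, hA, Matrix.one_mul]
  have hB' (C : Matrix m k R) : Bᵀ * (B * C) = C := by
    rw [← Matrix.mul_assoc, hB, Matrix.one_mul]
  have hBA' (C : Matrix l k R) : Bᵀ * (A * C) = 0 := by
    rw [← Matrix.mul_assoc, hBA, Matrix.zero_mul]
  have hAB' (C : Matrix m k R) : Aᵀ * (B * C) = 0 := by
    rw [← Matrix.mul_assoc, transpose_mul_eq_zero_comm.2 hBA, Matrix.zero_mul]
  simp only [transpose_add, transpose_mul, transpose_transpose, Matrix.add_mul, Matrix.mul_add,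
    Matrix.mul_assoc, hA', hB', hAB', hBA', Matrix.mul_zero, add_zero, zero_add, hUW]

end Orthonormal

/-- L : P ↦ M_T U_k U_kᵀ + V_{n−k} P U_{n−k}ᵀ is a bijection from 𝕆_{n−k} onto
𝕄(X,Y) with inverse M ↦ V_{n−k}ᵀ M U_{n−k}: L maps 𝕆_{n−k} into 𝕄(X,Y), the inverse map
sends 𝕄(X,Y) into 𝕆_{n−k}, and the two maps are mutually inverse. -/
theorem L_bijection {n q k : ℕ}
    (X : Matrix (Fin n) (Fin q) ℝ) (MT : Matrix (Fin n) (Fin n) ℝ) (hMT : MTᵀ * MT = 1)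
    (hk : Module.finrank ℝ (colSpace X) = k)
    (Uk : Matrix (Fin n) (Fin k) ℝ) (hUk : Ukᵀ * Uk = 1)
    (hUkspan : colSpace Uk = colSpace X)
    (U2 : Matrix (Fin n) (Fin (n - k)) ℝ) (hU2 : U2ᵀ * U2 = 1)
    (hU2span : (colSpace U2 : Set (Fin n → ℝ)) = perpSet (colSpace X))
    (V2 : Matrix (Fin n) (Fin (n - k)) ℝ) (hV2 : V2ᵀ * V2 = 1)
    (hV2span : (colSpace V2 : Set (Fin n → ℝ)) = perpSet (colSpace (MT * X))) :
    (∀ P : Matrix (Fin (n - k)) (Fin (n - k)) ℝ, Pᵀ * P = 1 →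
      (MT * Uk * Ukᵀ + V2 * P * U2ᵀ)ᵀ * (MT * Uk * Ukᵀ + V2 * P * U2ᵀ) = 1 ∧
      (MT * Uk * Ukᵀ + V2 * P * U2ᵀ) * X = MT * X) ∧
    (∀ M : Matrix (Fin n) (Fin n) ℝ, Mᵀ * M = 1 → M * X = MT * X →
      (V2ᵀ * M * U2)ᵀ * (V2ᵀ * M * U2) = 1) ∧
    (∀ P : Matrix (Fin (n - k)) (Fin (n - k)) ℝ, Pᵀ * P = 1 →
      V2ᵀ * (MT * Uk * Ukᵀ + V2 * P * U2ᵀ) * U2 = P) ∧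
    (∀ M : Matrix (Fin n) (Fin n) ℝ, Mᵀ * M = 1 → M * X = MT * X →
      MT * Uk * Ukᵀ + V2 * (V2ᵀ * M * U2) * U2ᵀ = M) := by
  have hkn : k ≤ n :=
    hk ▸ (Submodule.finrank_le (colSpace X)).trans_eq (Module.finrank_fin_fun ℝ)
  obtain ⟨D, hD⟩ := colSpace_le_iff.1 hUkspan.le
  have hU2X : U2ᵀ * X = 0 := colSpace_subset_perpSet_iff.1 hU2span.subset
  have hUkX : Uk * (Ukᵀ * X) = X := mul_transpose_mul_of_colSpace_le hUk hUkspan.ge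
  have hUkU2 : Ukᵀ * U2 = 0 := by
    rw [transpose_mul_eq_zero_comm, hD, ← Matrix.mul_assoc, hU2X, Matrix.zero_mul]
  have hV2Uk : V2ᵀ * (MT * Uk) = 0 := by
    rw [hD, ← Matrix.mul_assoc MT, ← Matrix.mul_assoc,
      colSpace_subset_perpSet_iff.1 hV2span.subset, Matrix.zero_mul]
  have hUU : Uk * Ukᵀ + U2 * U2ᵀ = 1 := mul_transpose_add_mul_transpose_eq_one
    (finSumFinEquiv.trans (finCongr (Nat.add_sub_cancel' hkn))).symm hUk hU2 hUkU2
  have hV2MU2 (M : Matrix (Fin n) (Fin n) ℝ) (hM : Mᵀ * M = 1) (hMX : M * X = MT * X) :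
      V2 * (V2ᵀ * (M * U2)) = M * U2 := by
    refine mul_transpose_mul_of_colSpace_le hV2 (SetLike.coe_subset_coe.1 ?_)
    rw [hV2span, colSpace_subset_perpSet_iff, ← hMX, transpose_mul, Matrix.mul_assoc,
      ← Matrix.mul_assoc Mᵀ, hM, Matrix.one_mul, hU2X]
  refine ⟨fun P hP => ⟨?_, ?_⟩, fun M hM hMX => ?_, fun P hP => ?_, fun M hM hMX => ?_⟩
  · refine transpose_mul_self_add_eq_one (transpose_mul_self_mul_eq_one hMT hUk)
      (transpose_mul_self_mul_eq_one hV2 hP) ?_ hUU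
    rw [transpose_mul, Matrix.mul_assoc, hV2Uk, Matrix.mul_zero]
  · simp only [Matrix.add_mul, Matrix.mul_assoc, hUkX, hU2X, Matrix.mul_zero, add_zero]
  · simp only [transpose_mul, transpose_transpose, Matrix.mul_assoc, hV2MU2 M hM hMX]
    rw [← Matrix.mul_assoc Mᵀ, hM, Matrix.one_mul, hU2]
  · simp only [Matrix.mul_add, Matrix.add_mul, Matrix.mul_assoc, hUkU2, hU2, Matrix.mul_zero,
      Matrix.mul_one, zero_add]
    rw [← Matrix.mul_assoc, hV2, Matrix.one_mul]
  · have hMUk : M * Uk = MT * Uk := by rw [hD, ← Matrix.mul_assoc, hMX, Matrix.mul_assoc]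
    rw [← hMUk, Matrix.mul_assoc V2ᵀ, hV2MU2 M hM hMX, Matrix.mul_assoc, Matrix.mul_assoc,
      ← Matrix.mul_add, hUU, Matrix.mul_one]
end

section
/- Assume additionally that the columns of U_k and U_{n−k} together form an orthonormal basis of ℝⁿ (i.e., U = [U_k | U_{n−k}] is orthogonal). For every (n−k)×(n−k) orthogonal matrix P, setting M̂ = M_T U_k U_kᵀ + V_{n−k} P U_{n−k}ᵀ, it holds for every x ∈ ℝⁿ that ‖M̂ᵀ M_T x − x‖ = ‖Pᵀ V_{n−k}ᵀ M_T x − U_{n−k}ᵀ x‖. -/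
open Matrix

/-!
Since `M_T` is orthogonal and `U_k U_kᵀ = I - U_{n-k} U_{n-k}ᵀ`, the `U_k`-part of `M̂ᵀ M_T`
is `I - U_{n-k} U_{n-k}ᵀ`, so `M̂ᵀ M_T x - x = U_{n-k} (Pᵀ V_{n-k}ᵀ M_T x - U_{n-k}ᵀ x)`.
The columns of `U_{n-k}` are orthonormal, so multiplying by `U_{n-k}` preserves the norm.
-/

theorem euclNorm_eq_sqrt_dotProduct {m : ℕ} (x : Fin m → ℝ) : euclNorm x = √(x ⬝ᵥ x) := by
  simp only [euclNorm, dotProduct, sq]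

theorem euclNorm_mulVec_of_transpose_mul_self {m p : ℕ} {A : Matrix (Fin m) (Fin p) ℝ}
    (hA : Aᵀ * A = 1) (w : Fin p → ℝ) : euclNorm (A *ᵥ w) = euclNorm w := by
  rw [euclNorm_eq_sqrt_dotProduct, euclNorm_eq_sqrt_dotProduct, dotProduct_mulVec,
    ← mulVec_transpose, mulVec_mulVec, hA, one_mulVec]

section

variable {R m a b c : Type*} [CommRing R] [Fintype m] [Fintype a] [Fintype b] [Fintype c]
  [DecidableEq m] {M : Matrix m m R} {U₁ : Matrix m a R} {U₂ : Matrix m b R}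

theorem transpose_mul_add_mul_transpose_mul (hM : Mᵀ * M = 1)
    (hU : U₁ * U₁ᵀ + U₂ * U₂ᵀ = 1) (V : Matrix m c R) (P : Matrix c b R) :
    (M * U₁ * U₁ᵀ + V * P * U₂ᵀ)ᵀ * M = 1 + U₂ * (Pᵀ * Vᵀ * M - U₂ᵀ) := by
  calc (M * U₁ * U₁ᵀ + V * P * U₂ᵀ)ᵀ * M
      = U₁ * U₁ᵀ * (Mᵀ * M) + U₂ * (Pᵀ * Vᵀ * M) := by
        simp only [transpose_add, transpose_mul, transpose_transpose, add_mul, Matrix.mul_assoc]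
    _ = 1 + U₂ * (Pᵀ * Vᵀ * M - U₂ᵀ) := by
        rw [hM, Matrix.mul_one, Matrix.mul_sub, ← hU]
        abel

theorem transpose_mul_add_mul_transpose_mulVec_sub (hM : Mᵀ * M = 1)
    (hU : U₁ * U₁ᵀ + U₂ * U₂ᵀ = 1) (V : Matrix m c R) (P : Matrix c b R) (x : m → R) :
    (M * U₁ * U₁ᵀ + V * P * U₂ᵀ)ᵀ *ᵥ (M *ᵥ x) - x = U₂ *ᵥ (Pᵀ *ᵥ (Vᵀ *ᵥ (M *ᵥ x)) - U₂ᵀ *ᵥ x) := by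
  rw [mulVec_mulVec, transpose_mul_add_mul_transpose_mul hM hU, add_mulVec, one_mulVec,
    add_sub_cancel_left, ← mulVec_mulVec, sub_mulVec, mulVec_mulVec, mulVec_mulVec,
    mulVec_sub]

end

theorem norm_estimate_reduction_general {n k : ℕ}
    (MT : Matrix (Fin n) (Fin n) ℝ) (hMT : MTᵀ * MT = 1)
    (Uk : Matrix (Fin n) (Fin k) ℝ)
    (U2 : Matrix (Fin n) (Fin (n - k)) ℝ) (hU2 : U2ᵀ * U2 = 1)
    (V2 : Matrix (Fin n) (Fin (n - k)) ℝ)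
    (hcomplete : Uk * Ukᵀ + U2 * U2ᵀ = 1) :
    ∀ P : Matrix (Fin (n - k)) (Fin (n - k)) ℝ, Pᵀ * P = 1 →
      ∀ x : Fin n → ℝ,
        euclNorm ((MT * Uk * Ukᵀ + V2 * P * U2ᵀ)ᵀ.mulVec (MT.mulVec x) - x) =
          euclNorm (Pᵀ.mulVec (V2ᵀ.mulVec (MT.mulVec x)) - U2ᵀ.mulVec x) := by
  intro P _ x
  rw [transpose_mul_add_mul_transpose_mulVec_sub hMT hcomplete,
    euclNorm_mulVec_of_transpose_mul_self hU2]

/-- if the columns of U_k and U_{n−k} together form an orthonormal basis of ℝⁿ,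
then for M̂ = M_T U_k U_kᵀ + V_{n−k} P U_{n−k}ᵀ (P orthogonal) and every x,
‖M̂ᵀ M_T x − x‖ = ‖Pᵀ V_{n−k}ᵀ M_T x − U_{n−k}ᵀ x‖. -/
theorem norm_estimate_reduction {n q k : ℕ}
    (X : Matrix (Fin n) (Fin q) ℝ) (MT : Matrix (Fin n) (Fin n) ℝ) (hMT : MTᵀ * MT = 1)
    (hk : Module.finrank ℝ (colSpace X) = k)
    (Uk : Matrix (Fin n) (Fin k) ℝ) (hUk : Ukᵀ * Uk = 1)
    (hUkspan : colSpace Uk = colSpace X)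
    (U2 : Matrix (Fin n) (Fin (n - k)) ℝ) (hU2 : U2ᵀ * U2 = 1)
    (hU2span : (colSpace U2 : Set (Fin n → ℝ)) = perpSet (colSpace X))
    (V2 : Matrix (Fin n) (Fin (n - k)) ℝ) (hV2 : V2ᵀ * V2 = 1)
    (hV2span : (colSpace V2 : Set (Fin n → ℝ)) = perpSet (colSpace (MT * X)))
    (hUkU2 : Ukᵀ * U2 = 0)
    (hcomplete : Uk * Ukᵀ + U2 * U2ᵀ = 1) :
    ∀ P : Matrix (Fin (n - k)) (Fin (n - k)) ℝ, Pᵀ * P = 1 →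
      ∀ x : Fin n → ℝ,
        euclNorm ((MT * Uk * Ukᵀ + V2 * P * U2ᵀ)ᵀ.mulVec (MT.mulVec x) - x) =
          euclNorm (Pᵀ.mulVec (V2ᵀ.mulVec (MT.mulVec x)) - U2ᵀ.mulVec x) :=
  norm_estimate_reduction_general MT hMT Uk U2 hU2 V2 hcomplete
end
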